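/- Let u : ℂ → ℝ be a continuous subharmonic function that is harmonic outside a compact set K and bounded above outside K by a constant (in particular u(z) = O(log |z|) with the logarithmic term absent, i.e., u bounded). If u ≤ 0 on ∂W for a closed sector W ⊆ ℂ (intersection of two closed half-planes with a common boundary point) and u(z) = O(log|z|) as z → ∞ inside W, and u is subharmonic on the interior of W, then u ≤ 0 on W, provided the opening angle of W is less than 2π. (Phragmén–Lindelöf principle for sublogarithmic growth in a sector.) -/

import Mathlib

/-!
Rotate and translate so that the sector becomes `|arg w| ≤ (β - α)/2 < π`, where
`w = e^{-i(α+β)/2} (z - p)`. Then `h = Re (w + 1)^{1/4}` is harmonic on a neighbourhood of the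
closed sector, nonnegative, and at least `(√2/2)(|z - p| - 1)^{1/4}`, which beats `C log |z - p|`.
Hence for every `ε > 0` the sub-mean-value function `u - ε h` is `≤ 0` on the boundary of the
truncated sector `{z ∈ W, |z - p| ≤ R}` for large `R`, so by the maximum principle also inside it.
Letting `ε → 0` gives `u ≤ 0`.
-/

open Set

/-- The average of `u` over the circle of radius `r` centered at `z`. -/
noncomputable def circAvg (u : ℂ → ℝ) (z : ℂ) (r : ℝ) : ℝ :=
  (1 / (2 * Real.pi)) * ∫ θ in (0:ℝ)..(2 * Real.pi), u (z + r * Complex.exp (θ * Complex.I))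

/-- The closed sector with vertex `p` spanned by directions with angles in `[α, β]`. -/
noncomputable def sector (p : ℂ) (α β : ℝ) : Set ℂ :=
  {z : ℂ | ∃ r : ℝ, 0 ≤ r ∧ ∃ θ ∈ Icc α β, z = p + r * Complex.exp (θ * Complex.I)}

open Metric Filter Topology Asymptotics InnerProductSpace Real
open Complex (I slitPlane mem_slitPlane_iff)

theorem circAvg_eq_circleAverage (u : ℂ → ℝ) (z : ℂ) (r : ℝ) :
    circAvg u z r = circleAverage u z r := by
  simp only [circAvg, circleAverage, circleMap, one_div, smul_eq_mul]

theorem circleAverage_lt_of_le_of_lt {f : ℂ → ℝ} {c z₀ : ℂ} {R a : ℝ}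
    (hf : ContinuousOn f (sphere c |R|)) (hle : ∀ z ∈ sphere c |R|, f z ≤ a)
    (hz₀ : z₀ ∈ sphere c |R|) (hlt : f z₀ < a) : circleAverage f c R < a := by
  obtain ⟨θ₀, rfl⟩ : z₀ ∈ range (circleMap c R) := by rwa [range_circleMap]
  have hcont : Continuous fun θ => f (circleMap c R (θ + θ₀)) :=
    hf.comp_continuous (by fun_prop) fun θ => circleMap_mem_sphere' c R _
  have hint : ∫ θ in 0..2 * π, f (circleMap c R (θ + θ₀)) < ∫ _ in 0..2 * π, a :=
    intervalIntegral.integral_lt_integral_of_continuousOn_of_le_of_exists_lt (by positivity)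
      hcont.continuousOn continuousOn_const (fun θ _ => hle _ (circleMap_mem_sphere' c R _))
      ⟨0, ⟨le_rfl, by positivity⟩, by simpa using hlt⟩
  rw [intervalIntegral.integral_const, smul_eq_mul] at hint
  rw [circleAverage_eq_integral_add θ₀, smul_eq_mul]
  calc (2 * π)⁻¹ * ∫ θ in 0..2 * π, f (circleMap c R (θ + θ₀))
      < (2 * π)⁻¹ * ((2 * π - 0) * a) := by gcongr
    _ = a := by field_simp; ring

theorem InnerProductSpace.HarmonicAt.eventually_harmonicOnNhd_closedBall {f : ℂ → ℝ} {z : ℂ}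
    (hf : HarmonicAt f z) : ∀ᶠ r in 𝓝 (0 : ℝ), HarmonicOnNhd f (closedBall z |r|) := by
  obtain ⟨δ, hδ, hball⟩ := Metric.isOpen_iff.mp (isOpen_setOfPred_harmonicAt f) z hf
  filter_upwards [ball_mem_nhds (0 : ℝ) hδ] with r hr
  exact fun w hw => hball (closedBall_subset_ball (by simpa using hr) hw)

theorem Filter.Eventually.sub_smul_le_circleAverage {u h : ℂ → ℝ} {z : ℂ}
    (hu : Continuous u) (hsub : ∀ᶠ r in 𝓝[>] 0, u z ≤ circleAverage u z r)
    (hh : HarmonicAt h z) (ε : ℝ) :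
    ∀ᶠ r in 𝓝[>] 0, (u - ε • h) z ≤ circleAverage (u - ε • h) z r := by
  filter_upwards [hsub, nhdsWithin_le_nhds hh.eventually_harmonicOnNhd_closedBall]
    with r hur hhr
  have hhint := (hhr.continuousOn.mono sphere_subset_closedBall).circleIntegrable'.const_smul
    (a := ε)
  rw [circleAverage_sub hu.continuousOn.circleIntegrable' hhint, circleAverage_smul,
    hhr.circleAverage_eq]
  simpa using hur

theorem IsCompact.exists_isMaxOn_diff_of_frequently_le_circleAverage {K U : Set ℂ}
    (hK : IsCompact K) (hne : K.Nonempty) (hU : IsOpen U) (hUK : U ⊆ K) {v : ℂ → ℝ}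
    (hv : ContinuousOn v K) (hsub : ∀ z ∈ U, ∃ᶠ r in 𝓝[>] 0, v z ≤ circleAverage v z r) :
    ∃ z ∈ K \ U, IsMaxOn v K z := by
  obtain ⟨z₁, hz₁K, hz₁⟩ := hK.exists_isMaxOn hne hv
  have hA : IsCompact (K ∩ v ⁻¹' {v z₁}) := hK.of_isClosed_subset
    (hv.preimage_isClosed_of_isClosed hK.isClosed isClosed_singleton) inter_subset_left
  -- among the maximum points, one with largest real part cannot be interior
  obtain ⟨zs, ⟨hzsK, hzs⟩, hzs_re⟩ :=
    hA.exists_isMaxOn ⟨z₁, hz₁K, rfl⟩ Complex.continuous_re.continuousOn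
  have hmax : IsMaxOn v K zs := fun z hz => by
    rw [mem_preimage, mem_singleton_iff] at hzs
    simpa [hzs] using hz₁ hz
  refine ⟨zs, ⟨hzsK, fun hzsU => ?_⟩, hmax⟩
  obtain ⟨δ, hδ, hball⟩ := Metric.isOpen_iff.mp hU zs hzsU
  obtain ⟨r, hle, hr, hrδ⟩ := ((hsub zs hzsU).and_eventually (Ioo_mem_nhdsGT hδ)).exists
  have hsphere : sphere zs |r| ⊆ K := fun w hw =>
    hUK (hball (by rw [mem_ball, mem_sphere.mp hw, abs_of_pos hr]; exact hrδ))
  have hpt : zs + r ∈ sphere zs |r| := by simp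
  have hlt : v (zs + r) < v zs := by
    refine (hmax (hsphere hpt)).lt_of_ne fun heq => ?_
    have := hzs_re ⟨hsphere hpt, heq.trans hzs⟩
    simp only [mem_ofPred_eq, Complex.add_re, Complex.ofReal_re] at this
    linarith
  exact (circleAverage_lt_of_le_of_lt (hv.mono hsphere) (fun w hw => hmax (hsphere hw))
    hpt hlt).not_ge hle

noncomputable def sectorCoord (p : ℂ) (α β : ℝ) (z : ℂ) : ℂ :=
  Complex.exp (((-(α + β) / 2 : ℝ) : ℂ) * I) * (z - p)

theorem differentiable_sectorCoord (p : ℂ) (α β : ℝ) :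
    Differentiable ℂ (sectorCoord p α β) := by
  unfold sectorCoord
  fun_prop

theorem norm_sectorCoord (p : ℂ) (α β : ℝ) (z : ℂ) : ‖sectorCoord p α β z‖ = ‖z - p‖ := by
  rw [sectorCoord, norm_mul, Complex.norm_exp_ofReal_mul_I, one_mul]

theorem sectorCoord_add_polar (p : ℂ) (α β r θ : ℝ) :
    sectorCoord p α β (p + r * Complex.exp (θ * I))
      = r * Complex.exp (((θ - (α + β) / 2 : ℝ) : ℂ) * I) := by
  rw [sectorCoord, add_sub_cancel_left, mul_left_comm, ← Complex.exp_add]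
  push_cast
  ring_nf

/-- The angle `(β - α)/4 + π/2` lies strictly between the half-opening `(β - α)/2` and `π`, so
this closed cone contains the rotated sector and meets the real axis only in `[0, ∞)`. -/
theorem sectorCoord_mem_cone {p : ℂ} {α β : ℝ} (hangle : β - α < 2 * π) {z : ℂ}
    (hz : z ∈ sector p α β) :
    |(sectorCoord p α β z).im| * cos ((β - α) / 4 + π / 2)
      ≤ (sectorCoord p α β z).re * sin ((β - α) / 4 + π / 2) := by
  obtain ⟨r, hr, θ, ⟨hαθ, hθβ⟩, rfl⟩ := hz
  set ξ := θ - (α + β) / 2 with hξ_def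
  have hξ : |ξ| ≤ (β - α) / 2 := abs_le.mpr ⟨by linarith, by linarith⟩
  have hsin : 0 ≤ sin ((β - α) / 4 + π / 2 - |ξ|) :=
    sin_nonneg_of_nonneg_of_le_pi (by linarith) (by linarith [abs_nonneg ξ])
  rw [sectorCoord_add_polar, Complex.re_ofReal_mul, Complex.im_ofReal_mul,
    Complex.exp_ofReal_mul_I_re, Complex.exp_ofReal_mul_I_im, abs_mul, abs_of_nonneg hr,
    abs_sin_eq_sin_abs_of_abs_le_pi (by linarith), ← cos_abs ξ]
  rw [sin_sub] at hsin
  nlinarith [mul_nonneg hr hsin]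

theorem closure_sector_subset {p : ℂ} {α β : ℝ} (hαβ : α ≤ β) (hangle : β - α < 2 * π) :
    closure (sector p α β) ⊆ {z | sectorCoord p α β z + 1 ∈ slitPlane} := by
  set γ := (β - α) / 4 + π / 2 with hγ
  have hsin : 0 < sin γ := sin_pos_of_pos_of_lt_pi (by linarith [pi_pos]) (by linarith)
  have hclosed : IsClosed {z | |(sectorCoord p α β z).im| * cos γ
      ≤ (sectorCoord p α β z).re * sin γ} := by
    have := (differentiable_sectorCoord p α β).continuous
    exact isClosed_le (by fun_prop) (by fun_prop)
  refine (closure_minimal (fun z hz => sectorCoord_mem_cone hangle hz) hclosed).trans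
    fun z hz => ?_
  rw [mem_ofPred_eq, mem_slitPlane_iff, Complex.add_re, Complex.one_re, Complex.add_im,
    Complex.one_im, add_zero]
  replace hz : |(sectorCoord p α β z).im| * cos γ ≤ (sectorCoord p α β z).re * sin γ := hz
  by_cases him : (sectorCoord p α β z).im = 0
  · rw [him, abs_zero, zero_mul] at hz
    exact Or.inl (by linarith [nonneg_of_mul_nonneg_left hz hsin])
  · exact Or.inr him

/-- The shift by `1` keeps the closed sector, vertex included, off the branch cut. -/
noncomputable def sectorBarrier (p : ℂ) (α β : ℝ) (z : ℂ) : ℝ :=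
  ((sectorCoord p α β z + 1) ^ ((1 / 4 : ℝ) : ℂ)).re

theorem norm_rpow_mul_cos_le_re_cpow (w : ℂ) {s : ℝ} (hs₀ : 0 ≤ s) (hs₁ : s ≤ 1) :
    ‖w‖ ^ s * cos (π * s) ≤ (w ^ (s : ℂ)).re := by
  rw [Complex.cpow_ofReal_re]
  refine mul_le_mul_of_nonneg_left ?_ (by positivity)
  rw [← cos_abs (Complex.arg w * s)]
  refine cos_le_cos_of_nonneg_of_le_pi (abs_nonneg _) (by nlinarith [pi_pos]) ?_
  rw [abs_mul, abs_of_nonneg hs₀]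
  exact mul_le_mul_of_nonneg_right (Complex.abs_arg_le_pi w) hs₀

theorem norm_rpow_mul_le_sectorBarrier (p : ℂ) (α β : ℝ) (z : ℂ) :
    ‖sectorCoord p α β z + 1‖ ^ (1 / 4 : ℝ) * (√2 / 2) ≤ sectorBarrier p α β z := by
  have := norm_rpow_mul_cos_le_re_cpow (sectorCoord p α β z + 1)
    (s := 1 / 4) (by norm_num) (by norm_num)
  rwa [mul_one_div, cos_pi_div_four] at this

theorem sectorBarrier_nonneg (p : ℂ) (α β : ℝ) (z : ℂ) : 0 ≤ sectorBarrier p α β z :=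
  (by positivity : (0 : ℝ) ≤ _ * (√2 / 2)).trans (norm_rpow_mul_le_sectorBarrier p α β z)

theorem sub_one_rpow_mul_le_sectorBarrier {p : ℂ} {α β : ℝ} {z : ℂ} (hz : 1 ≤ ‖z - p‖) :
    (‖z - p‖ - 1) ^ (1 / 4 : ℝ) * (√2 / 2) ≤ sectorBarrier p α β z := by
  have hnorm := norm_sub_le (sectorCoord p α β z + 1) 1
  rw [add_sub_cancel_right, norm_one, norm_sectorCoord] at hnorm
  refine le_trans ?_ (norm_rpow_mul_le_sectorBarrier p α β z)
  gcongr
  linarith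

theorem harmonicAt_sectorBarrier {p : ℂ} {α β : ℝ} {z : ℂ}
    (hz : sectorCoord p α β z + 1 ∈ slitPlane) : HarmonicAt (sectorBarrier p α β) z :=
  (AnalyticAt.cpow (((differentiable_sectorCoord p α β).add_const 1).analyticAt z)
    analyticAt_const hz).harmonicAt_re

theorem eventually_mul_log_le_mul_rpow (C : ℝ) {c s : ℝ} (hc : 0 < c) (hs : 0 < s) :
    ∀ᶠ R in atTop, C * log (2 + R) ≤ c * (R - 1) ^ s := by
  have hlog : (fun R => log (2 + R)) =o[atTop] fun R => (2 + R) ^ s :=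
    (isLittleO_log_rpow_atTop hs).comp_tendsto (tendsto_atTop_add_const_left _ 2 tendsto_id)
  have hshift : (fun R : ℝ => (2 + R) ^ s) =O[atTop] fun R => (R - 1) ^ s := by
    refine IsBigO.of_bound (4 ^ s) ?_
    filter_upwards [eventually_ge_atTop 2] with R hR
    rw [norm_of_nonneg (by positivity), norm_of_nonneg (rpow_nonneg (by linarith) _),
      ← mul_rpow (by norm_num) (by linarith)]
    exact rpow_le_rpow (by linarith) (by linarith) hs.le
  filter_upwards [((hlog.trans_isBigO hshift).const_mul_left C).def hc,
    eventually_ge_atTop 1] with R hR hR1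
  rw [norm_of_nonneg (rpow_nonneg (by linarith) _)] at hR
  exact (le_abs_self _).trans hR

theorem le_mul_sectorBarrier {p : ℂ} {α β : ℝ} (hαβ : α ≤ β) (hangle : β - α < 2 * π)
    {u : ℂ → ℝ} (hu : Continuous u)
    (hsub : ∀ z ∈ interior (sector p α β), ∀ᶠ r in 𝓝[>] 0, u z ≤ circleAverage u z r)
    (hbd : ∀ z ∈ frontier (sector p α β), u z ≤ 0) {C : ℝ}
    (hgrowth : ∀ z ∈ sector p α β, u z ≤ C * log (2 + ‖z - p‖)) {ε : ℝ} (hε : 0 < ε)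
    {z₀ : ℂ} (hz₀ : z₀ ∈ sector p α β) : u z₀ ≤ ε * sectorBarrier p α β z₀ := by
  set S := sector p α β
  set h := sectorBarrier p α β
  set v : ℂ → ℝ := u - ε • h
  have hharm : ∀ z ∈ closure S, HarmonicAt h z := fun z hz =>
    harmonicAt_sectorBarrier (closure_sector_subset hαβ hangle hz)
  obtain ⟨R, hRarc, hR1, hz₀R⟩ :=
    ((eventually_mul_log_le_mul_rpow C (c := ε * (√2 / 2)) (by positivity)
      (by norm_num : (0 : ℝ) < 1 / 4)).and
      ((eventually_ge_atTop 1).and (eventually_gt_atTop ‖z₀ - p‖))).exists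
  have hz₀K : z₀ ∈ closedBall p R ∩ closure S :=
    ⟨mem_closedBall_iff_norm.mpr hz₀R.le, subset_closure hz₀⟩
  have hv : ContinuousOn v (closedBall p R ∩ closure S) := fun z hz =>
    (hu.continuousAt.sub ((hharm z hz.2).1.continuousAt.const_smul ε)).continuousWithinAt
  have hvsub (z : ℂ) (hz : z ∈ ball p R ∩ interior S) :
      ∃ᶠ r in 𝓝[>] 0, v z ≤ circleAverage v z r :=
    ((hsub z hz.2).sub_smul_le_circleAverage hu
      (hharm z (interior_subset_closure hz.2)) ε).frequently
  have hK : IsCompact (closedBall p R ∩ closure S) :=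
    (isCompact_closedBall p R).inter_right isClosed_closure
  obtain ⟨z₁, ⟨hz₁K, hz₁U⟩, hz₁max⟩ :=
    hK.exists_isMaxOn_diff_of_frequently_le_circleAverage ⟨z₀, hz₀K⟩
      (isOpen_ball.inter isOpen_interior)
      (inter_subset_inter ball_subset_closedBall interior_subset_closure) hv hvsub
  have hz₁ : v z₁ ≤ 0 := by
    simp only [v, Pi.sub_apply, Pi.smul_apply, smul_eq_mul, sub_nonpos]
    by_cases hint : z₁ ∈ interior S
    · have hnorm : ‖z₁ - p‖ = R := le_antisymm (mem_closedBall_iff_norm.mp hz₁K.1)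
        (not_lt.mp fun hlt => hz₁U ⟨mem_ball_iff_norm.mpr hlt, hint⟩)
      have hbarrier := sub_one_rpow_mul_le_sectorBarrier (α := α) (β := β) (hnorm ▸ hR1)
      rw [hnorm] at hbarrier
      calc u z₁ ≤ C * log (2 + R) := hnorm ▸ hgrowth z₁ (interior_subset hint)
        _ ≤ ε * ((R - 1) ^ (1 / 4 : ℝ) * (√2 / 2)) := by linarith
        _ ≤ ε * h z₁ := by gcongr
    · exact (hbd z₁ ⟨hz₁K.2, hint⟩).trans (mul_nonneg hε.le (sectorBarrier_nonneg p α β z₁))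
  have hz₀z₁ : v z₀ ≤ v z₁ := hz₁max hz₀K
  simp only [v, Pi.sub_apply, Pi.smul_apply, smul_eq_mul] at hz₀z₁ hz₁
  linarith

theorem stmt12_general (p : ℂ) (α β : ℝ) (hangle : β - α < 2 * Real.pi)
    (u : ℂ → ℝ) (hu : Continuous u)
    (hsub : ∀ z ∈ interior (sector p α β), ∃ r₀ > 0, ∀ r : ℝ, 0 < r → r < r₀ →
      u z ≤ circAvg u z r)
    (hbd : ∀ z ∈ frontier (sector p α β), u z ≤ 0)
    (hgrowth : ∃ C : ℝ, ∀ z ∈ sector p α β, u z ≤ C * Real.log (2 + ‖z - p‖)) :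
    ∀ z ∈ sector p α β, u z ≤ 0 := by
  intro z₀ hz₀
  obtain ⟨C, hC⟩ := hgrowth
  have hαβ : α ≤ β := by
    obtain ⟨-, -, θ, hθ, -⟩ := hz₀
    exact hθ.1.trans hθ.2
  have hsub' : ∀ z ∈ interior (sector p α β), ∀ᶠ r in 𝓝[>] 0, u z ≤ circleAverage u z r := by
    intro z hz
    obtain ⟨r₀, hr₀, hr⟩ := hsub z hz
    filter_upwards [Ioo_mem_nhdsGT hr₀] with r ⟨hr0, hrr₀⟩
    exact circAvg_eq_circleAverage u z r ▸ hr r hr0 hrr₀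
  have hlim : Tendsto (fun ε => ε * sectorBarrier p α β z₀) (𝓝[>] 0) (𝓝 0) := by
    simpa using ((continuous_mul_const (sectorBarrier p α β z₀)).tendsto 0).mono_left
      nhdsWithin_le_nhds
  refine ge_of_tendsto hlim ?_
  filter_upwards [self_mem_nhdsWithin] with ε hε
  exact le_mul_sectorBarrier hαβ hangle hu hsub' hbd hC hε hz₀

/-- Phragmén–Lindelöf principle for sublogarithmic growth in a sector: a continuous
function, subharmonic on the interior of a closed sector `W` of opening angle `< 2π`,
nonpositive on the boundary of `W`, and of growth `O(log |z|)` in `W`, is nonpositive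
throughout `W`. -/
theorem stmt12 (p : ℂ) (α β : ℝ) (hαβ : α ≤ β) (hangle : β - α < 2 * Real.pi)
    (u : ℂ → ℝ) (hu : Continuous u)
    (hsub : ∀ z ∈ interior (sector p α β), ∃ r₀ > 0, ∀ r : ℝ, 0 < r → r < r₀ →
      u z ≤ circAvg u z r)
    (hbd : ∀ z ∈ frontier (sector p α β), u z ≤ 0)
    (hgrowth : ∃ C : ℝ, ∀ z ∈ sector p α β, u z ≤ C * Real.log (2 + ‖z - p‖)) :
    ∀ z ∈ sector p α β, u z ≤ 0 :=
  stmt12_general p α β hangle u hu hsub hbd hgrowth
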